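/- The entries b_{i,j} of R_n^2 satisfy b_{i,j+1} = b_{i-1,j+1} + 2 b_{i-1,j} - b_{i,j} for all 2 ≤ i ≤ n and 1 ≤ j ≤ n-1. -/
import Mathlib

open Polynomial Finset

/-- `R n` is the `n × n` integer matrix whose 1-based `(i,j)` entry is `C(i-1, n-j)`. -/
def Rmat (n : ℕ) : Matrix (Fin n) (Fin n) ℤ :=
  Matrix.of fun i j => (Nat.choose i.1 (n - 1 - j.1) : ℤ)

lemma coeff_key (n i : ℕ) (hi : i < n) (c : ℕ) :
    (((1:ℤ[X]) + X) ^ (n - 1 - i) * (2 + X) ^ i).coeff c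
      = ∑ k ∈ range n, (Nat.choose i (n - 1 - k) : ℤ) * Nat.choose k c := by
  have h2 : ((2:ℤ[X]) + X) ^ i
      = ∑ k ∈ range (i+1), (Nat.choose i k : ℤ[X]) * (1+X)^(i-k) := by
    have : ((2:ℤ[X]) + X) = 1 + (1+X) := by ring
    rw [this, add_pow]
    exact Finset.sum_congr rfl fun k hk => by ring
  rw [h2, Finset.mul_sum]
  have hterm : ∀ k ∈ range (i+1),
      ((1:ℤ[X]) + X) ^ (n - 1 - i) * ((Nat.choose i k : ℤ[X]) * (1+X)^(i-k))
        = (Nat.choose i k : ℤ[X]) * (1+X)^(n-1-k) := by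
    intro k hk
    rw [mem_range] at hk
    have : n - 1 - i + (i - k) = n - 1 - k := by omega
    rw [← this, pow_add]; ring
  rw [Finset.sum_congr rfl hterm, finset_sum_coeff]
  have hco : ∀ k ∈ range (i+1),
      ((Nat.choose i k : ℤ[X]) * (1+X)^(n-1-k)).coeff c
        = (Nat.choose i k : ℤ) * Nat.choose (n-1-k) c := by
    intro k hk
    rw [← Polynomial.C_eq_natCast, Polynomial.coeff_C_mul, coeff_one_add_X_pow]
  rw [Finset.sum_congr rfl hco]
  rw [Finset.sum_subset (Finset.range_subset_range.2 (by omega : i + 1 ≤ n))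
    (fun k _ hk => by
      rw [mem_range] at *
      rw [Nat.choose_eq_zero_of_lt (by omega : i < k)]
      simp)]
  rw [← Finset.sum_range_reflect]
  refine Finset.sum_congr rfl fun k hk => ?_
  rw [mem_range] at hk
  have h : n - 1 - (n - 1 - k) = k := by omega
  rw [h]

lemma Rmat_sq_entry (n : ℕ) (i j : Fin n) :
    (Rmat n ^ 2) i j
      = (((1:ℤ[X]) + X) ^ (n - 1 - i.1) * (2 + X) ^ i.1).coeff (n - 1 - j.1) := by
  rw [coeff_key n i.1 i.isLt, sq, Matrix.mul_apply]
  rw [← Fin.sum_univ_eq_sum_range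
    (fun k => (Nat.choose i.1 (n - 1 - k) : ℤ) * Nat.choose k (n - 1 - j.1)) n]
  rfl

/-- The entries `b_{i,j}` of `R_n ^ 2` satisfy
`b_{i,j+1} = b_{i-1,j+1} + 2 b_{i-1,j} - b_{i,j}` for `2 ≤ i ≤ n`, `1 ≤ j ≤ n-1`
(1-based indexing). -/
theorem Rmat_sq_recurrence (n : ℕ) (hn : 2 ≤ n) (i j : ℕ)
    (hi2 : 2 ≤ i) (hin : i ≤ n) (hj1 : 1 ≤ j) (hjn : j ≤ n - 1) :
    (Rmat n ^ 2) ⟨i - 1, by omega⟩ ⟨j, by omega⟩ =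
      (Rmat n ^ 2) ⟨i - 2, by omega⟩ ⟨j, by omega⟩
        + 2 * (Rmat n ^ 2) ⟨i - 2, by omega⟩ ⟨j - 1, by omega⟩
        - (Rmat n ^ 2) ⟨i - 1, by omega⟩ ⟨j - 1, by omega⟩ := by
  rw [Rmat_sq_entry, Rmat_sq_entry, Rmat_sq_entry, Rmat_sq_entry]
  simp only
  set a := i - 1 with ha
  set c := n - 1 - j with hc
  have hc1 : n - 1 - (j - 1) = c + 1 := by omega
  have hia : i - 2 = a - 1 := by omega
  rw [hc1, hia]
  set Qa : ℤ[X] := ((1:ℤ[X]) + X) ^ (n - 1 - a) * (2 + X) ^ a with hQa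
  set Qb : ℤ[X] := ((1:ℤ[X]) + X) ^ (n - 1 - (a - 1)) * (2 + X) ^ (a - 1) with hQb
  have key : (1 + X) * Qa = (2 + X) * Qb := by
    rw [hQa, hQb]
    have e1 : n - 1 - (a - 1) = (n - 1 - a) + 1 := by omega
    have e2 : a = (a - 1) + 1 := by omega
    rw [e1, pow_succ,
      show ((2:ℤ[X]) + X) ^ a = (2 + X) ^ (a - 1) * (2 + X) by rw [← pow_succ, ← e2]]
    ring
  have hL : ((1 + X) * Qa).coeff (c + 1) = Qa.coeff (c + 1) + Qa.coeff c := by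
    rw [add_mul, one_mul, coeff_add, coeff_X_mul]
  have hR : ((2 + X) * Qb).coeff (c + 1) = 2 * Qb.coeff (c + 1) + Qb.coeff c := by
    rw [add_mul, coeff_add, coeff_X_mul]
    congr 1
    rw [show ((2:ℤ[X])) = Polynomial.C 2 by norm_num, Polynomial.coeff_C_mul]
  have heq : Qa.coeff (c + 1) + Qa.coeff c = 2 * Qb.coeff (c + 1) + Qb.coeff c := by
    rw [← hL, ← hR, key]
  linarith
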